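/- arXiv:2211.10750 — 5 statements merged into one kernel-verified Lean document; each statement's English description precedes it below -/
import Mathlib

section
/- Let K ⊂ ℝ be a Cantor set, let I be an interval with K̃ := K ∩ I a Cantor set, let ε ∈ (0,1), and suppose g is a continuously differentiable monotone function on I satisfying | |g′(x)|/|g′(y)| − 1 | < ε for all x, y ∈ I. Then for every bounded gap endpoint u of K̃, the image of the ε-bridge satisfies g(B_ε(u)) ⊆ B_{ε²}(g(u)) (the ε²-bridge of g(K̃) at g(u)), and consequently the ε²-thickness of g(K̃) satisfies τ_{ε²}(g(K̃)) ≥ (1 − ε)·τ_ε(K̃). -/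
open Set

/-- A Cantor set: non-empty, compact, perfect, totally disconnected subset of ℝ. -/
def IsCantorSet (K : Set ℝ) : Prop :=
  K.Nonempty ∧ IsCompact K ∧ Perfect K ∧ IsTotallyDisconnected K

def IsBoundedGap (K : Set ℝ) (a b : ℝ) : Prop :=
  a < b ∧ a ∈ K ∧ b ∈ K ∧ Set.Ioo a b ∩ K = ∅

/-- The right endpoint of the `ε`-bridge at `u`, where `u` is the right endpoint of a bounded
gap of length `ℓ`: the nearest point `a > u` which is either `sSup K` or the left endpoint of
a gap `(a, b)` with `b - a > (1 - ε) ℓ`. -/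
noncomputable def rightBridgeEndE (K : Set ℝ) (u ℓ ε : ℝ) : ℝ :=
  sInf {a : ℝ | u < a ∧ (a = sSup K ∨ ∃ b, IsBoundedGap K a b ∧ (1 - ε) * ℓ < b - a)}

noncomputable def leftBridgeEndE (K : Set ℝ) (u ℓ ε : ℝ) : ℝ :=
  sSup {a : ℝ | a < u ∧ (a = sInf K ∨ ∃ b, IsBoundedGap K b a ∧ (1 - ε) * ℓ < a - b)}

/-- The set of `ε`-thickness values `|B_ε(u)|/|G|` at endpoints of bounded gaps of `K`. -/
def epsThicknessValues (K : Set ℝ) (ε : ℝ) : Set ℝ :=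
  {r : ℝ | ∃ a b : ℝ, IsBoundedGap K a b ∧
      (r = (rightBridgeEndE K b (b - a) ε - b) / (b - a) ∨
       r = (a - leftBridgeEndE K a (b - a) ε) / (b - a))}

/-- The `ε`-thickness `τ_ε(K)`. -/
noncomputable def epsThickness (K : Set ℝ) (ε : ℝ) : ℝ := sInf (epsThicknessValues K ε)


/-!
By the mean value theorem every difference quotient of `g` on `I` is a value of `g'`, so any
two difference quotients of `g` have ratio within `ε` of `1`; by Darboux `g'` has constant sign,
and replacing `g` by `-g` we may assume `g` increasing. Let `(a, b)` be a gap of `K̃`. A gap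
`(g p, g q)` of `g(K̃)` to the right of `g b` with `g q - g p > (1 - ε²)(g b - g a)` comes from a
gap `(p, q)` of `K̃` with `q - p > (1 - ε²)/(1 + ε) · (b - a) = (1 - ε)(b - a)`, so the
`ε`-bridge at `b` ends no later than `p`; hence `g` maps it into the `ε²`-bridge at `g b`.
Comparing the difference quotients over the bridge and over the gap costs the factor `1 - ε` in
thickness. Bridges at left endpoints reduce to right ones under `x ↦ -g (-x)`.
-/

variable {K C I : Set ℝ} {g g' : ℝ → ℝ} {a b u ℓ ε : ℝ}

lemma IsBoundedGap.neg (h : IsBoundedGap K a b) : IsBoundedGap (-K) (-b) (-a) := by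
  obtain ⟨hab, ha, hb, hgap⟩ := h
  refine ⟨neg_lt_neg hab, by simpa using hb, by simpa using ha, ?_⟩
  rw [← neg_Ioo, ← Set.inter_neg, hgap, Set.neg_empty]

lemma isBoundedGap_neg_iff : IsBoundedGap (-K) a b ↔ IsBoundedGap K (-b) (-a) :=
  ⟨fun h => by simpa using h.neg, fun h => by simpa using h.neg⟩

lemma rightBridgeEndE_neg (K : Set ℝ) (u ℓ ε : ℝ) :
    rightBridgeEndE (-K) (-u) ℓ ε = -leftBridgeEndE K u ℓ ε := by
  rw [rightBridgeEndE, leftBridgeEndE, ← Real.sInf_neg]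
  congr 1
  ext x
  simp only [mem_ofPred_eq, mem_neg, Real.sSup_neg, isBoundedGap_neg_iff]
  refine and_congr neg_lt (or_congr neg_eq_iff_eq_neg.symm ?_)
  constructor
  · rintro ⟨c, hc, hlen⟩
    exact ⟨-c, by simpa using hc, by linarith⟩
  · rintro ⟨c, hc, hlen⟩
    exact ⟨-c, by rwa [neg_neg], by linarith⟩

lemma leftBridgeEndE_neg (K : Set ℝ) (u ℓ ε : ℝ) :
    leftBridgeEndE (-K) (-u) ℓ ε = -rightBridgeEndE K u ℓ ε := by
  have h := rightBridgeEndE_neg (-K) (-u) ℓ ε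
  rw [neg_neg, neg_neg] at h
  rw [h, neg_neg]

lemma epsThicknessValues_neg_subset (K : Set ℝ) (ε : ℝ) :
    epsThicknessValues (-K) ε ⊆ epsThicknessValues K ε := by
  rintro r ⟨a, b, hgap, rfl | rfl⟩
  · refine ⟨-b, -a, isBoundedGap_neg_iff.mp hgap, Or.inr ?_⟩
    rw [← neg_neg b, rightBridgeEndE_neg, neg_neg]
    ring_nf
  · refine ⟨-b, -a, isBoundedGap_neg_iff.mp hgap, Or.inl ?_⟩
    rw [← neg_neg a, leftBridgeEndE_neg, neg_neg]
    ring_nf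

lemma epsThickness_neg (K : Set ℝ) (ε : ℝ) : epsThickness (-K) ε = epsThickness K ε := by
  refine congrArg sInf (Subset.antisymm (epsThicknessValues_neg_subset K ε) ?_)
  simpa using epsThicknessValues_neg_subset (-K) ε

lemma image_neg_comp (g : ℝ → ℝ) (s : Set ℝ) : (fun x => -g x) '' s = -(g '' s) := by
  rw [← image_neg_eq_neg, image_image]

lemma image_neg_comp_neg (g : ℝ → ℝ) (s : Set ℝ) : (fun x => -g (-x)) '' (-s) = -(g '' s) := by
  rw [← image_neg_eq_neg, ← image_neg_eq_neg, image_image, image_image]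
  simp only [neg_neg]

lemma IsBoundedGap.lt_sSup (hK : Perfect K) (hbdd : BddAbove K) (h : IsBoundedGap K a b) :
    b < sSup K := by
  obtain ⟨y, ⟨hay, hyK⟩, hyb⟩ :=
    accPt_iff_nhds.mp (hK.acc b h.2.2.1) _ (Ioi_mem_nhds h.1)
  have hby : b ≤ y := not_lt.mp fun hyb' => h.2.2.2.subset ⟨⟨hay, hyb'⟩, hyK⟩
  exact (lt_of_le_of_ne hby (Ne.symm hyb)).trans_le (le_csSup hbdd hyK)

lemma IsBoundedGap.sInf_lt (hK : Perfect K) (hbdd : BddBelow K) (h : IsBoundedGap K a b) :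
    sInf K < a := by
  obtain ⟨y, ⟨hyb, hyK⟩, hya⟩ :=
    accPt_iff_nhds.mp (hK.acc a h.2.1) _ (Iio_mem_nhds h.1)
  have hya' : y ≤ a := not_lt.mp fun hay => h.2.2.2.subset ⟨⟨hay, hyb⟩, hyK⟩
  exact (csInf_le hbdd hyK).trans_lt (lt_of_le_of_ne hya' hya)

lemma StrictMonoOn.isBoundedGap_image_iff {p q : ℝ} (hg : StrictMonoOn g K) (hp : p ∈ K)
    (hq : q ∈ K) : IsBoundedGap (g '' K) (g p) (g q) ↔ IsBoundedGap K p q := by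
  have hIoo : K ∩ g ⁻¹' Ioo (g p) (g q) = K ∩ Ioo p q := by
    ext x
    refine and_congr_right fun hx => ?_
    exact and_congr (hg.lt_iff_lt hp hx) (hg.lt_iff_lt hx hq)
  simp only [IsBoundedGap, hg.lt_iff_lt hp hq, mem_image_of_mem g hp, mem_image_of_mem g hq,
    hp, hq, true_and, inter_comm (Ioo _ _), ← image_inter_preimage, image_eq_empty, hIoo]

lemma rightBridgeEndE_le_sSup (hu : u < sSup K) : rightBridgeEndE K u ℓ ε ≤ sSup K :=
  csInf_le ⟨u, fun _ h => h.1.le⟩ ⟨hu, Or.inl rfl⟩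

lemma rightBridgeEndE_le_of_isBoundedGap {p q : ℝ} (hu : u < p) (h : IsBoundedGap K p q)
    (hlen : (1 - ε) * ℓ < q - p) : rightBridgeEndE K u ℓ ε ≤ p :=
  csInf_le ⟨u, fun _ h => h.1.le⟩ ⟨hu, Or.inr ⟨q, h, hlen⟩⟩

lemma le_rightBridgeEndE (hu : u < sSup K) : u ≤ rightBridgeEndE K u ℓ ε :=
  le_csInf ⟨_, hu, Or.inl rfl⟩ fun _ h => h.1.le

lemma rightBridgeEndE_mem (hK : IsCompact K) (huK : u ∈ K) (hu : u < sSup K) :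
    rightBridgeEndE K u ℓ ε ∈ K := by
  refine hK.isClosed.closure_subset_iff.mpr ?_ (csInf_mem_closure ⟨_, hu, Or.inl rfl⟩
    ⟨u, fun _ h => h.1.le⟩)
  rintro x ⟨-, rfl | ⟨y, hxy, -⟩⟩
  exacts [hK.sSup_mem ⟨u, huK⟩, hxy.2.1]

lemma leftBridgeEndE_le (hu : sInf K < u) : leftBridgeEndE K u ℓ ε ≤ u := by
  have h := le_rightBridgeEndE (K := -K) (u := -u) (ℓ := ℓ) (ε := ε)
    (by rwa [Real.sSup_neg, neg_lt_neg_iff])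
  rwa [rightBridgeEndE_neg, neg_le_neg_iff] at h

lemma leftBridgeEndE_mem (hK : IsCompact K) (huK : u ∈ K) (hu : sInf K < u) :
    leftBridgeEndE K u ℓ ε ∈ K := by
  have h := rightBridgeEndE_mem (ℓ := ℓ) (ε := ε) hK.neg (neg_mem_neg.mpr huK)
    (by rwa [Real.sSup_neg, neg_lt_neg_iff])
  rwa [rightBridgeEndE_neg, neg_mem_neg] at h

lemma sub_eq_slope_mul (g : ℝ → ℝ) (p q : ℝ) : g q - g p = slope g p q * (q - p) := by
  rw [mul_comm, ← smul_eq_mul, sub_smul_slope, vsub_eq_sub]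

def SlopeRatioWithin (g : ℝ → ℝ) (s : Set ℝ) (ε : ℝ) : Prop :=
  ∀ p ∈ s, ∀ q ∈ s, ∀ r ∈ s, ∀ t ∈ s, p < q → r < t → |slope g p q / slope g r t - 1| < ε

namespace SlopeRatioWithin

lemma slope_mem_Ioo {p q r t : ℝ} (h : SlopeRatioWithin g K ε) (hg : StrictMonoOn g K)
    (hp : p ∈ K) (hq : q ∈ K) (hr : r ∈ K) (ht : t ∈ K) (hpq : p < q) (hrt : r < t) :
    slope g p q ∈ Ioo ((1 - ε) * slope g r t) ((1 + ε) * slope g r t) := by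
  have hpos := hg.slope_pos hr ht hrt.ne
  obtain ⟨hlo, hhi⟩ := abs_lt.mp (h p hp q hq r hr t ht hpq hrt)
  exact ⟨(lt_div_iff₀ hpos).mp (by linarith), (div_lt_iff₀ hpos).mp (by linarith)⟩

lemma neg_comp_neg (h : SlopeRatioWithin g K ε) : SlopeRatioWithin (fun x => -g (-x)) (-K) ε := by
  intro p hp q hq r hr t ht hpq hrt
  have := h (-q) hq (-p) hp (-t) ht (-r) hr (neg_lt_neg hpq) (neg_lt_neg hrt)
  simp only [slope_def_field] at this ⊢
  convert this using 4 <;> ring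

lemma neg (h : SlopeRatioWithin g K ε) : SlopeRatioWithin (fun x => -g x) K ε := by
  intro p hp q hq r hr t ht hpq hrt
  convert h p hp q hq r hr t ht hpq hrt using 3
  simp only [slope_def_field, neg_sub_neg, ← neg_sub (g q), ← neg_sub (g t), neg_div,
    div_neg, neg_neg]

lemma mono {s : Set ℝ} (h : SlopeRatioWithin g K ε) (hs : s ⊆ K) : SlopeRatioWithin g s ε :=
  fun p hp q hq r hr t ht => h p (hs hp) q (hs hq) r (hs hr) t (hs ht)

lemma mul_div_le {x y p q : ℝ} (hslope : SlopeRatioWithin g K ε)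
    (hg : StrictMonoOn g K) (hx : x ∈ K) (hy : y ∈ K) (hp : p ∈ K) (hq : q ∈ K) (hxy : x ≤ y)
    (hpq : p < q) : (1 - ε) * ((y - x) / (q - p)) ≤ (g y - g x) / (g q - g p) := by
  rcases hxy.eq_or_lt with rfl | hxy
  · simp
  have hpos := hg.slope_pos hp hq hpq.ne
  have hlo := (hslope.slope_mem_Ioo hg hx hy hp hq hxy hpq).1
  rw [sub_eq_slope_mul g x y, sub_eq_slope_mul g p q, mul_div_mul_comm]
  exact mul_le_mul_of_nonneg_right ((le_div_iff₀ hpos).mpr hlo.le)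
    (div_nonneg (sub_nonneg.mpr hxy.le) (sub_nonneg.mpr hpq.le))

end SlopeRatioWithin

lemma StrictMonoOn.neg_comp_neg (hg : StrictMonoOn g K) :
    StrictMonoOn (fun x => -g (-x)) (-K) :=
  fun _ hx _ hy hxy => neg_lt_neg (hg hy hx (neg_lt_neg hxy))

namespace Set.OrdConnected

variable (hI : I.OrdConnected) (hderiv : ∀ x ∈ I, HasDerivWithinAt g (g' x) I x)
include hI hderiv

lemma exists_mem_slope_eq {p q : ℝ} (hp : p ∈ I) (hq : q ∈ I)
    (hpq : p < q) : ∃ c ∈ I, slope g p q = g' c := by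
  have hIcc := hI.out hp hq
  obtain ⟨c, hc, hslope⟩ := exists_hasDerivAt_eq_slope g g' hpq
    (fun x hx => (hderiv x (hIcc hx)).continuousWithinAt.mono hIcc)
    (fun x hx => (hderiv x (hIcc (Ioo_subset_Icc_self hx))).hasDerivAt
      (Filter.mem_of_superset (Icc_mem_nhds hx.1 hx.2) hIcc))
  exact ⟨c, hIcc (Ioo_subset_Icc_self hc), by rw [slope_def_field, hslope]⟩

lemma strictMonoOn_of_hasDerivWithinAt_pos (hpos : ∀ x ∈ I, 0 < g' x) :
    StrictMonoOn g I := by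
  intro p hp q hq hpq
  obtain ⟨c, hc, hslope⟩ := hI.exists_mem_slope_eq hderiv hp hq hpq
  exact (slope_pos_iff hpq).mp (hslope ▸ hpos c hc)

lemma strictAntiOn_of_hasDerivWithinAt_neg (hneg : ∀ x ∈ I, g' x < 0) :
    StrictAntiOn g I := by
  intro p hp q hq hpq
  obtain ⟨c, hc, hslope⟩ := hI.exists_mem_slope_eq hderiv hp hq hpq
  exact (slope_neg_iff_of_le hpq.le).mp (hslope ▸ hneg c hc)

lemma slopeRatioWithin_of_hasDerivWithinAt (hsign : (∀ x ∈ I, 0 < g' x) ∨ ∀ x ∈ I, g' x < 0)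
    (hratio : ∀ x ∈ I, ∀ y ∈ I, |(|g' x| / |g' y|) - 1| < ε) : SlopeRatioWithin g I ε := by
  intro p hp q hq r hr t ht hpq hrt
  obtain ⟨c, hc, hpq⟩ := hI.exists_mem_slope_eq hderiv hp hq hpq
  obtain ⟨d, hd, hrt⟩ := hI.exists_mem_slope_eq hderiv hr ht hrt
  have hcd : 0 < g' c / g' d := by
    rcases hsign with h | h
    exacts [div_pos (h c hc) (h d hd), div_pos_of_neg_of_neg (h c hc) (h d hd)]
  simpa only [hpq, hrt, ← abs_div, abs_of_pos hcd] using hratio c hc d hd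

lemma forall_pos_or_forall_neg_of_hasDerivWithinAt
    (hratio : ∀ x ∈ I, ∀ y ∈ I, |(|g' x| / |g' y|) - 1| < ε) (hε : ε ≤ 1) :
    (∀ x ∈ I, 0 < g' x) ∨ ∀ x ∈ I, g' x < 0 :=
  (hasDerivWithinAt_forall_lt_or_forall_gt_of_forall_ne hI.convex hderiv fun x hx h0 => by
    simpa [h0] using (hratio x hx x hx).trans_le hε).symm

end Set.OrdConnected

lemma map_rightBridgeEndE_le (hC : IsCompact C) (hg : StrictMonoOn g C)
    (hslope : SlopeRatioWithin g C ε) (hab : IsBoundedGap C a b) (hb : b < sSup C) :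
    g (rightBridgeEndE C b (b - a) ε) ≤ rightBridgeEndE (g '' C) (g b) (g b - g a) (ε ^ 2) := by
  obtain ⟨hab', haC, hbC, -⟩ := hab
  have hsupC := hC.sSup_mem ⟨b, hbC⟩
  have hAC := rightBridgeEndE_mem (ℓ := b - a) (ε := ε) hC hbC hb
  have hsup : sSup (g '' C) = g (sSup C) :=
    (hg.monotoneOn.map_isGreatest (hC.isGreatest_sSup ⟨b, hbC⟩)).csSup_eq
  refine le_csInf ⟨_, hsup ▸ hg hbC hsupC hb, Or.inl rfl⟩ ?_
  rintro z ⟨hz, rfl | ⟨y, hgap, hlen⟩⟩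
  · rw [hsup]
    exact hg.monotoneOn hAC hsupC (rightBridgeEndE_le_sSup hb)
  obtain ⟨p, hp, rfl⟩ := hgap.2.1
  obtain ⟨q, hq, rfl⟩ := hgap.2.2.1
  have hpq := (hg.isBoundedGap_image_iff hp hq).mp hgap
  refine hg.monotoneOn hAC hp
    (rightBridgeEndE_le_of_isBoundedGap ((hg.lt_iff_lt hbC hp).mp hz) hpq ?_)
  -- `(1 - ε²) (g b - g a) < g q - g p < (1 + ε) (slope g a b) (q - p)`:
  -- cancel `(1 + ε) (slope g a b)`
  have hε : 0 < 1 + ε := by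
    linarith [(abs_nonneg _).trans_lt (hslope a haC b hbC a haC b hbC hab' hab')]
  have hpos := hg.slope_pos haC hbC hab'.ne
  have hslope_pq := (hslope.slope_mem_Ioo hg hp hq haC hbC hpq.1 hab').2
  rw [sub_eq_slope_mul g p q, sub_eq_slope_mul g a b] at hlen
  refine lt_of_mul_lt_mul_left ?_ (mul_pos hε hpos).le
  nlinarith [mul_lt_mul_of_pos_right hslope_pq (sub_pos.mpr hpq.1)]

lemma leftBridgeEndE_le_map (hC : IsCompact C) (hg : StrictMonoOn g C)
    (hslope : SlopeRatioWithin g C ε) (hab : IsBoundedGap C a b) (ha : sInf C < a) :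
    leftBridgeEndE (g '' C) (g a) (g b - g a) (ε ^ 2) ≤ g (leftBridgeEndE C a (b - a) ε) := by
  have h := map_rightBridgeEndE_le hC.neg hg.neg_comp_neg hslope.neg_comp_neg hab.neg
    (by rwa [Real.sSup_neg, neg_lt_neg_iff])
  simpa only [image_neg_comp_neg, neg_neg, neg_sub_neg, rightBridgeEndE_neg, neg_le_neg_iff]
    using h

section Increasing

variable (hI : I.OrdConnected) (hC : IsCompact C) (hperf : Perfect C) (hCI : C ⊆ I)
  (hg : StrictMonoOn g I) (hslope : SlopeRatioWithin g C ε)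
include hI hC hperf hCI hg hslope

lemma image_Icc_rightBridgeEndE_subset (hab : IsBoundedGap C a b) :
    g '' Icc b (rightBridgeEndE C b (b - a) ε) ⊆
      Icc (g b) (rightBridgeEndE (g '' C) (g b) (g b - g a) (ε ^ 2)) := by
  have hb := hab.lt_sSup hperf hC.bddAbove
  have hA := rightBridgeEndE_mem (ℓ := b - a) (ε := ε) hC hab.2.2.1 hb
  exact (hg.monotoneOn.mono (hI.out (hCI hab.2.2.1) (hCI hA))).image_Icc_subset.trans
    (Icc_subset_Icc_right (map_rightBridgeEndE_le hC (hg.mono hCI) hslope hab hb))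

lemma image_Icc_leftBridgeEndE_subset (hab : IsBoundedGap C a b) :
    g '' Icc (leftBridgeEndE C a (b - a) ε) a ⊆
      Icc (leftBridgeEndE (g '' C) (g a) (g b - g a) (ε ^ 2)) (g a) := by
  have ha := hab.sInf_lt hperf hC.bddBelow
  have hL := leftBridgeEndE_mem (ℓ := b - a) (ε := ε) hC hab.2.1 ha
  exact (hg.monotoneOn.mono (hI.out (hCI hL) (hCI hab.2.1))).image_Icc_subset.trans
    (Icc_subset_Icc_left (leftBridgeEndE_le_map hC (hg.mono hCI) hslope hab ha))

end Increasing

section Decreasing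

variable (hI : I.OrdConnected) (hC : IsCompact C) (hperf : Perfect C) (hCI : C ⊆ I)
  (hg : StrictAntiOn g I) (hslope : SlopeRatioWithin g C ε)
include hI hC hperf hCI hg hslope

lemma image_Icc_rightBridgeEndE_subset_of_strictAntiOn (hab : IsBoundedGap C a b) :
    g '' Icc b (rightBridgeEndE C b (b - a) ε) ⊆
      Icc (leftBridgeEndE (g '' C) (g b) (g a - g b) (ε ^ 2)) (g b) := by
  simpa only [image_neg_comp, neg_sub_neg, rightBridgeEndE_neg, ← neg_Icc, neg_subset_neg] using
    image_Icc_rightBridgeEndE_subset hI hC hperf hCI hg.neg hslope.neg hab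

lemma image_Icc_leftBridgeEndE_subset_of_strictAntiOn (hab : IsBoundedGap C a b) :
    g '' Icc (leftBridgeEndE C a (b - a) ε) a ⊆
      Icc (g a) (rightBridgeEndE (g '' C) (g a) (g a - g b) (ε ^ 2)) := by
  simpa only [image_neg_comp, neg_sub_neg, leftBridgeEndE_neg, ← neg_Icc, neg_subset_neg] using
    image_Icc_leftBridgeEndE_subset hI hC hperf hCI hg.neg hslope.neg hab

end Decreasing

lemma mul_sInf_le_sInf {S T : Set ℝ} {c : ℝ} (hc : 0 ≤ c) (hS : BddBelow S)
    (hST : S.Nonempty → T.Nonempty) (h : ∀ t ∈ T, ∃ s ∈ S, c * s ≤ t) :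
    c * sInf S ≤ sInf T := by
  rcases T.eq_empty_or_nonempty with rfl | hT
  · rw [not_nonempty_iff_eq_empty.mp (mt hST not_nonempty_empty), Real.sInf_empty, mul_zero]
  refine le_csInf hT fun t ht => ?_
  obtain ⟨s, hs, hst⟩ := h t ht
  exact (mul_le_mul_of_nonneg_left (csInf_le hS hs) hc).trans hst

lemma mul_epsThickness_le_epsThickness_image (hC : IsCompact C) (hperf : Perfect C)
    (hg : StrictMonoOn g C) (hslope : SlopeRatioWithin g C ε) (hε : ε ≤ 1) :
    (1 - ε) * epsThickness C ε ≤ epsThickness (g '' C) (ε ^ 2) := by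
  refine mul_sInf_le_sInf (sub_nonneg.mpr hε) ⟨0, ?_⟩ ?_ ?_
  · rintro r ⟨p, q, hpq, rfl | rfl⟩
    · exact div_nonneg (sub_nonneg.mpr (le_rightBridgeEndE (hpq.lt_sSup hperf hC.bddAbove)))
        (sub_nonneg.mpr hpq.1.le)
    · exact div_nonneg (sub_nonneg.mpr (leftBridgeEndE_le (hpq.sInf_lt hperf hC.bddBelow)))
        (sub_nonneg.mpr hpq.1.le)
  · rintro ⟨_, p, q, hpq, -⟩
    exact ⟨_, g p, g q, (hg.isBoundedGap_image_iff hpq.2.1 hpq.2.2.1).mpr hpq, Or.inl rfl⟩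
  rintro _ ⟨_, _, hgap, hr⟩
  obtain ⟨p, hp, rfl⟩ := hgap.2.1
  obtain ⟨q, hq, rfl⟩ := hgap.2.2.1
  have hpq := (hg.isBoundedGap_image_iff hp hq).mp hgap
  have hgpq := sub_pos.mpr (hg hp hq hpq.1)
  rcases hr with rfl | rfl
  · have hb := hpq.lt_sSup hperf hC.bddAbove
    refine ⟨_, ⟨p, q, hpq, Or.inl rfl⟩, (hslope.mul_div_le hg hq
      (rightBridgeEndE_mem hC hq hb) hp hq (le_rightBridgeEndE hb) hpq.1).trans ?_⟩
    exact div_le_div_of_nonneg_right (by linarith [map_rightBridgeEndE_le hC hg hslope hpq hb])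
      hgpq.le
  · have ha := hpq.sInf_lt hperf hC.bddBelow
    refine ⟨_, ⟨p, q, hpq, Or.inr rfl⟩, (hslope.mul_div_le hg
      (leftBridgeEndE_mem hC hp ha) hp hp hq (leftBridgeEndE_le ha) hpq.1).trans ?_⟩
    exact div_le_div_of_nonneg_right (by linarith [leftBridgeEndE_le_map hC hg hslope hpq ha])
      hgpq.le

lemma mul_epsThickness_le_epsThickness_image_of_strictAntiOn (hC : IsCompact C) (hperf : Perfect C)
    (hg : StrictAntiOn g C) (hslope : SlopeRatioWithin g C ε) (hε : ε ≤ 1) :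
    (1 - ε) * epsThickness C ε ≤ epsThickness (g '' C) (ε ^ 2) := by
  simpa only [image_neg_comp, epsThickness_neg] using
    mul_epsThickness_le_epsThickness_image hC hperf hg.neg hslope.neg hε

lemma StrictMonoOn.not_antitoneOn {α β : Type*} [LinearOrder α] [PartialOrder β] {f : α → β}
    {s : Set α} (hf : StrictMonoOn f s) (hs : s.Nontrivial) : ¬AntitoneOn f s := by
  obtain ⟨x, hx, y, hy, hxy⟩ := hs
  intro h
  rcases hxy.lt_or_gt with hxy | hxy
  exacts [(hf hx hy hxy).not_ge (h hx hy hxy.le), (hf hy hx hxy).not_ge (h hy hx hxy.le)]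

lemma StrictAntiOn.not_monotoneOn {α β : Type*} [LinearOrder α] [PartialOrder β] {f : α → β}
    {s : Set α} (hf : StrictAntiOn f s) (hs : s.Nontrivial) : ¬MonotoneOn f s := by
  obtain ⟨x, hx, y, hy, hxy⟩ := hs
  intro h
  rcases hxy.lt_or_gt with hxy | hxy
  exacts [(h hx hy hxy.le).not_gt (hf hx hy hxy), (h hy hx hxy.le).not_gt (hf hy hx hxy)]

theorem eps_bridge_image_subset_general (K : Set ℝ)
    (I : Set ℝ) (hI : I.OrdConnected) (hKI : IsCantorSet (K ∩ I))
    (ε : ℝ) (hε1 : ε < 1) (g g' : ℝ → ℝ)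
    (hderiv : ∀ x ∈ I, HasDerivWithinAt g (g' x) I x)
    (hratio : ∀ x ∈ I, ∀ y ∈ I, |(|g' x| / |g' y|) - 1| < ε) :
    (∀ a b : ℝ, IsBoundedGap (K ∩ I) a b →
      -- the bridge at the right endpoint `b` of the gap `(a,b)`
      ((MonotoneOn g I →
          g '' Icc b (rightBridgeEndE (K ∩ I) b (b - a) ε) ⊆
            Icc (g b) (rightBridgeEndE (g '' (K ∩ I)) (g b) (g b - g a) (ε ^ 2))) ∧
       (AntitoneOn g I →
          g '' Icc b (rightBridgeEndE (K ∩ I) b (b - a) ε) ⊆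
            Icc (leftBridgeEndE (g '' (K ∩ I)) (g b) (g a - g b) (ε ^ 2)) (g b)) ∧
      -- the bridge at the left endpoint `a` of the gap `(a,b)`
       (MonotoneOn g I →
          g '' Icc (leftBridgeEndE (K ∩ I) a (b - a) ε) a ⊆
            Icc (leftBridgeEndE (g '' (K ∩ I)) (g a) (g b - g a) (ε ^ 2)) (g a)) ∧
       (AntitoneOn g I →
          g '' Icc (leftBridgeEndE (K ∩ I) a (b - a) ε) a ⊆
            Icc (g a) (rightBridgeEndE (g '' (K ∩ I)) (g a) (g a - g b) (ε ^ 2))))) ∧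
    epsThickness (g '' (K ∩ I)) (ε ^ 2) ≥ (1 - ε) * epsThickness (K ∩ I) ε := by
  obtain ⟨-, hC, hperf, -⟩ := hKI
  have hCI : K ∩ I ⊆ I := inter_subset_right
  have hsign := hI.forall_pos_or_forall_neg_of_hasDerivWithinAt hderiv hratio hε1.le
  have hslope := (hI.slopeRatioWithin_of_hasDerivWithinAt hderiv hsign hratio).mono hCI
  rcases hsign with hpos | hneg
  · have hg := hI.strictMonoOn_of_hasDerivWithinAt_pos hderiv hpos
    refine ⟨fun a b hab => ?_,
      mul_epsThickness_le_epsThickness_image hC hperf (hg.mono hCI) hslope hε1.le⟩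
    have hanti := hg.not_antitoneOn ⟨a, hCI hab.2.1, b, hCI hab.2.2.1, hab.1.ne⟩
    exact ⟨fun _ => image_Icc_rightBridgeEndE_subset hI hC hperf hCI hg hslope hab,
      fun h => (hanti h).elim,
      fun _ => image_Icc_leftBridgeEndE_subset hI hC hperf hCI hg hslope hab,
      fun h => (hanti h).elim⟩
  · have hg := hI.strictAntiOn_of_hasDerivWithinAt_neg hderiv hneg
    refine ⟨fun a b hab => ?_,
      mul_epsThickness_le_epsThickness_image_of_strictAntiOn hC hperf (hg.mono hCI) hslope
        hε1.le⟩
    have hmono := hg.not_monotoneOn ⟨a, hCI hab.2.1, b, hCI hab.2.2.1, hab.1.ne⟩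
    exact ⟨fun h => (hmono h).elim,
      fun _ => image_Icc_rightBridgeEndE_subset_of_strictAntiOn hI hC hperf hCI hg hslope hab,
      fun h => (hmono h).elim,
      fun _ => image_Icc_leftBridgeEndE_subset_of_strictAntiOn hI hC hperf hCI hg hslope hab⟩

/-- **Lemma.** Let `K̃ := K ∩ I` be a Cantor set, `ε ∈ (0,1)`, and let `g` be a continuously
differentiable monotone function on the interval `I` with `| |g'(x)|/|g'(y)| − 1 | < ε` on `I`.
Then for every endpoint `u` of a bounded gap of `K̃`, the image of the `ε`-bridge of `K̃` at `u`
is contained in the `ε²`-bridge of `g(K̃)` at `g(u)` (with the appropriate orientation according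
to whether `g` is increasing or decreasing), and consequently
`τ_{ε²}(g(K̃)) ≥ (1 − ε) · τ_ε(K̃)`. -/
theorem eps_bridge_image_subset (K : Set ℝ) (hK : IsCantorSet K)
    (I : Set ℝ) (hI : I.OrdConnected) (hKI : IsCantorSet (K ∩ I))
    (ε : ℝ) (hε0 : 0 < ε) (hε1 : ε < 1) (g g' : ℝ → ℝ)
    (hderiv : ∀ x ∈ I, HasDerivWithinAt g (g' x) I x)
    (hcont : ContinuousOn g' I)
    (hmono : MonotoneOn g I ∨ AntitoneOn g I)
    (hratio : ∀ x ∈ I, ∀ y ∈ I, |(|g' x| / |g' y|) - 1| < ε) :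
    (∀ a b : ℝ, IsBoundedGap (K ∩ I) a b →
      -- the bridge at the right endpoint `b` of the gap `(a,b)`
      ((MonotoneOn g I →
          g '' Icc b (rightBridgeEndE (K ∩ I) b (b - a) ε) ⊆
            Icc (g b) (rightBridgeEndE (g '' (K ∩ I)) (g b) (g b - g a) (ε ^ 2))) ∧
       (AntitoneOn g I →
          g '' Icc b (rightBridgeEndE (K ∩ I) b (b - a) ε) ⊆
            Icc (leftBridgeEndE (g '' (K ∩ I)) (g b) (g a - g b) (ε ^ 2)) (g b)) ∧
      -- the bridge at the left endpoint `a` of the gap `(a,b)`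
       (MonotoneOn g I →
          g '' Icc (leftBridgeEndE (K ∩ I) a (b - a) ε) a ⊆
            Icc (leftBridgeEndE (g '' (K ∩ I)) (g a) (g b - g a) (ε ^ 2)) (g a)) ∧
       (AntitoneOn g I →
          g '' Icc (leftBridgeEndE (K ∩ I) a (b - a) ε) a ⊆
            Icc (g a) (rightBridgeEndE (g '' (K ∩ I)) (g a) (g a - g b) (ε ^ 2))))) ∧
    epsThickness (g '' (K ∩ I)) (ε ^ 2) ≥ (1 - ε) * epsThickness (K ∩ I) ε :=
  eps_bridge_image_subset_general K I hI hKI ε hε1 g g' hderiv hratio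
end

section
/- Let K ⊂ ℝ be a Cantor set, let x ∈ K, and let I ⊂ ℝ be an open interval containing x. Then there exists a compact interval J ⊆ I containing x such that K′ := K ∩ J is a Cantor set satisfying τ(K′) ≥ τ(K). Moreover, if x is a gap endpoint of K, then J may be chosen so that x is a gap endpoint of K′ (in fact an endpoint of J); and if x is not a gap endpoint of K, then J may be chosen so that x is not a gap endpoint of K′. -/
open Set

/-- The right endpoint of the bridge at `u`, where `u` is the right endpoint of a bounded gap
of length `ℓ`: the nearest point `a > u` which is either `sSup K` (left endpoint of the
unbounded right gap) or the left endpoint of a gap `(a, b)` with `ℓ ≤ b - a`. -/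
noncomputable def rightBridgeEnd (K : Set ℝ) (u ℓ : ℝ) : ℝ :=
  sInf {a : ℝ | u < a ∧ (a = sSup K ∨ ∃ b, IsBoundedGap K a b ∧ ℓ ≤ b - a)}

/-- The left endpoint of the bridge at `u`, where `u` is the left endpoint of a bounded gap
of length `ℓ`. -/
noncomputable def leftBridgeEnd (K : Set ℝ) (u ℓ : ℝ) : ℝ :=
  sSup {a : ℝ | a < u ∧ (a = sInf K ∨ ∃ b, IsBoundedGap K b a ∧ ℓ ≤ a - b)}

/-- The set of thickness values `|B(u)|/|G|` at endpoints `u` of bounded gaps `G` of `K`. -/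
def thicknessValues (K : Set ℝ) : Set ℝ :=
  {r : ℝ | ∃ a b : ℝ, IsBoundedGap K a b ∧
      (r = (rightBridgeEnd K b (b - a) - b) / (b - a) ∨
       r = (a - leftBridgeEnd K a (b - a)) / (b - a))}

/-- The (Newhouse) thickness of `K`. -/
noncomputable def thickness (K : Set ℝ) : ℝ := sInf (thicknessValues K)

/-- `x` is an endpoint of a gap (a connected component of the complement) of `K`. -/
def IsGapEndpoint (K : Set ℝ) (x : ℝ) : Prop :=
  (∃ b, IsBoundedGap K x b) ∨ (∃ a, IsBoundedGap K a x) ∨ x = sInf K ∨ x = sSup K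

lemma gap_absurd {K : Set ℝ} {u v z : ℝ} (h : K ∩ Ioo u v = ∅) (hz : z ∈ K)
    (h1 : u < z) (h2 : z < v) : False :=
  eq_empty_iff_forall_notMem.mp h z ⟨hz, h1, h2⟩

lemma not_isolated {K : Set ℝ} (hK : Perfect K) {u x v : ℝ} (hx : x ∈ K)
    (hu : u < x) (hv : x < v) (h1 : K ∩ Ioo u x = ∅) (h2 : K ∩ Ioo x v = ∅) : False := by
  obtain ⟨y, ⟨hyU, hyK⟩, hyx⟩ := preperfect_iff_nhds.mp hK.acc x hx (Ioo u v)
    (Ioo_mem_nhds hu hv)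
  rcases lt_trichotomy y x with h | h | h
  · exact gap_absurd h1 hyK hyU.1 h
  · exact hyx h
  · exact gap_absurd h2 hyK h hyU.2

lemma acc_right {K : Set ℝ} (hK : Perfect K) {u x : ℝ} (hx : x ∈ K) (hu : u < x)
    (h1 : K ∩ Ioo u x = ∅) {ε : ℝ} (hε : 0 < ε) : (K ∩ Ioo x (x + ε)).Nonempty := by
  by_contra h
  exact not_isolated hK hx hu (by linarith) h1 (not_nonempty_iff_eq_empty.mp h)

lemma acc_left {K : Set ℝ} (hK : Perfect K) {x v : ℝ} (hx : x ∈ K) (hv : x < v)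
    (h2 : K ∩ Ioo x v = ∅) {ε : ℝ} (hε : 0 < ε) : (K ∩ Ioo (x - ε) x).Nonempty := by
  by_contra h
  exact not_isolated hK hx (by linarith) hv (not_nonempty_iff_eq_empty.mp h) h2

lemma exists_gap {K : Set ℝ} (hcomp : IsCompact K) (htd : IsTotallyDisconnected K)
    {c d : ℝ} (hc : c ∈ K) (hd : d ∈ K) (hcd : c < d) :
    ∃ p q, c ≤ p ∧ q ≤ d ∧ IsBoundedGap K p q := by
  have hnot : ¬ Icc c d ⊆ K := by
    intro hsub
    have := htd (Icc c d) hsub isPreconnected_Icc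
    exact absurd (this (left_mem_Icc.mpr hcd.le) (right_mem_Icc.mpr hcd.le)) hcd.ne
  obtain ⟨y, hyIcc, hyK⟩ := not_subset.mp hnot
  have hcy : c < y := lt_of_le_of_ne hyIcc.1 (fun h => hyK (h ▸ hc))
  have hyd : y < d := lt_of_le_of_ne hyIcc.2 (fun h => hyK (h.symm ▸ hd))
  set A := K ∩ Icc c y with hA
  set B := K ∩ Icc y d with hB
  have hAc : IsCompact A := hcomp.inter_right isClosed_Icc
  have hBc : IsCompact B := hcomp.inter_right isClosed_Icc
  have hAne : A.Nonempty := ⟨c, hc, le_refl c, hcy.le⟩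
  have hBne : B.Nonempty := ⟨d, hd, hyd.le, le_refl d⟩
  set p := sSup A with hp
  set q := sInf B with hq
  have hpA : p ∈ A := hAc.sSup_mem hAne
  have hqB : q ∈ B := hBc.sInf_mem hBne
  have hpy : p < y := lt_of_le_of_ne hpA.2.2 (fun h => hyK (h ▸ hpA.1))
  have hyq : y < q := lt_of_le_of_ne (hqB.2.1) (fun h => hyK (h ▸ hqB.1))
  refine ⟨p, q, hpA.2.1, hqB.2.2, hpy.trans hyq, hpA.1, hqB.1, ?_⟩
  ext z
  simp only [mem_inter_iff, mem_Ioo, mem_empty_iff_false, iff_false]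
  rintro ⟨⟨hpz, hzq⟩, hzK⟩
  rcases le_or_gt z y with h | h
  · exact absurd (le_csSup hAc.bddAbove ⟨hzK, hpA.2.1.trans hpz.le, h⟩) (not_le.mpr hpz)
  · exact absurd (csInf_le hBc.bddBelow ⟨hzK, h.le, hzq.le.trans hqB.2.2⟩) (not_le.mpr hzq)

lemma csInf_mem_of_separated {S : Set ℝ} (hne : S.Nonempty) (hbd : BddBelow S) {δ : ℝ}
    (hδ : 0 < δ) (hsep : ∀ s ∈ S, ∀ t ∈ S, s < t → s + δ ≤ t) : sInf S ∈ S := by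
  obtain ⟨s, hsS, hs⟩ := (csInf_lt_iff hbd hne).mp (by linarith [hne.csInf_mem, csInf_le hbd hne.some_mem] : sInf S < sInf S + δ)
  have : s = sInf S := by
    refine le_antisymm ?_ (csInf_le hbd hsS)
    refine le_csInf hne fun t htS => ?_
    by_contra h
    push_neg at h
    have := hsep t htS s hsS h
    have := csInf_le hbd htS
    linarith
  exact this ▸ hsS

lemma csSup_mem_of_separated {S : Set ℝ} (hne : S.Nonempty) (hbd : BddAbove S) {δ : ℝ}
    (hδ : 0 < δ) (hsep : ∀ s ∈ S, ∀ t ∈ S, s < t → s + δ ≤ t) : sSup S ∈ S := by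
  obtain ⟨s, hsS, hs⟩ := (lt_csSup_iff hbd hne).mp (by linarith [le_csSup hbd hne.some_mem] : sSup S - δ < sSup S)
  have : s = sSup S := by
    refine le_antisymm (le_csSup hbd hsS) ?_
    refine csSup_le hne fun t htS => ?_
    by_contra h
    push_neg at h
    have := hsep s hsS t htS h
    have := le_csSup hbd htS
    linarith
  exact this ▸ hsS

lemma gap_of_empty_right {K : Set ℝ} (hcomp : IsCompact K) {x t : ℝ} (hx : x ∈ K)
    (ht : x < t) (hM : x < sSup K) (h : K ∩ Ioo x t = ∅) : ∃ q, IsBoundedGap K x q := by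
  have hKne : K.Nonempty := ⟨x, hx⟩
  by_cases hne : (K ∩ Ici t).Nonempty
  · set q := sInf (K ∩ Ici t) with hq
    have hqm : q ∈ K ∩ Ici t := (hcomp.inter_right isClosed_Ici).sInf_mem hne
    refine ⟨q, lt_of_lt_of_le ht hqm.2, hx, hqm.1, ?_⟩
    ext z
    simp only [mem_inter_iff, mem_Ioo, mem_empty_iff_false, iff_false]
    rintro ⟨⟨hxz, hzq⟩, hzK⟩
    rcases lt_or_ge z t with h' | h'
    · exact gap_absurd h hzK hxz h'
    · exact absurd (csInf_le (hcomp.inter_right isClosed_Ici).bddBelow ⟨hzK, h'⟩) (not_le.mpr hzq)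
  · exfalso
    have : ∀ z ∈ K, z ≤ x := by
      intro z hz
      by_contra hzx
      push_neg at hzx
      rcases lt_or_ge z t with h' | h'
      · exact gap_absurd h hz hzx h'
      · exact hne ⟨z, hz, h'⟩
    exact absurd (csSup_le hKne this) (not_le.mpr hM)

lemma gap_of_empty_left {K : Set ℝ} (hcomp : IsCompact K) {x t : ℝ} (hx : x ∈ K)
    (ht : t < x) (hM : sInf K < x) (h : K ∩ Ioo t x = ∅) : ∃ p, IsBoundedGap K p x := by
  have hKne : K.Nonempty := ⟨x, hx⟩
  by_cases hne : (K ∩ Iic t).Nonempty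
  · set p := sSup (K ∩ Iic t) with hp
    have hpm : p ∈ K ∩ Iic t := (hcomp.inter_right isClosed_Iic).sSup_mem hne
    refine ⟨p, lt_of_le_of_lt hpm.2 ht, hpm.1, hx, ?_⟩
    ext z
    simp only [mem_inter_iff, mem_Ioo, mem_empty_iff_false, iff_false]
    rintro ⟨⟨hpz, hzx⟩, hzK⟩
    rcases lt_or_ge t z with h' | h'
    · exact gap_absurd h hzK h' hzx
    · exact absurd (le_csSup (hcomp.inter_right isClosed_Iic).bddAbove ⟨hzK, h'⟩) (not_le.mpr hpz)
  · exfalso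
    have : ∀ z ∈ K, x ≤ z := by
      intro z hz
      by_contra hzx
      push_neg at hzx
      rcases lt_or_ge t z with h' | h'
      · exact gap_absurd h hz h' hzx
      · exact hne ⟨z, hz, h'⟩
    exact absurd (le_csInf hKne this) (not_le.mpr hM)


lemma main_aux {K : Set ℝ} (hK : IsCantorSet K) {a b δ : ℝ} (ha : a ∈ K) (hb : b ∈ K)
    (hab : a < b) (hδ : 0 < δ)
    (hA : a = sInf K ∨ ∃ p, IsBoundedGap K p a ∧ δ ≤ a - p)
    (hB : b = sSup K ∨ ∃ q, IsBoundedGap K b q ∧ δ ≤ q - b)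
    (hSmall : ∀ c d, IsBoundedGap K c d → a < c → d < b → d - c < δ) :
    IsCantorSet (K ∩ Icc a b) ∧ thickness K ≤ thickness (K ∩ Icc a b) := by
  obtain ⟨hKne, hKcomp, hKperf, hKtd⟩ := hK
  set K' : Set ℝ := K ∩ Icc a b with hK'def
  have hK'sub : K' ⊆ K := inter_subset_left
  have haK' : a ∈ K' := ⟨ha, le_refl a, hab.le⟩
  have hbK' : b ∈ K' := ⟨hb, hab.le, le_refl b⟩
  have hK'comp : IsCompact K' := hKcomp.inter_right isClosed_Icc
  have hK'td : IsTotallyDisconnected K' := fun t hts hpc => hKtd t (hts.trans hK'sub) hpc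
  have emptyA : ∃ u, u < a ∧ K ∩ Ioo u a = ∅ := by
    rcases hA with h | ⟨p, hgap, _⟩
    · refine ⟨a - 1, by linarith, ?_⟩
      ext z; simp only [mem_inter_iff, mem_Ioo, mem_empty_iff_false, iff_false]
      rintro ⟨hzK, _, hza⟩
      exact absurd (csInf_le hKcomp.bddBelow hzK) (by rw [← h]; linarith)
    · exact ⟨p, hgap.1, by rw [inter_comm]; exact hgap.2.2.2⟩
  have emptyB : ∃ v, b < v ∧ K ∩ Ioo b v = ∅ := by
    rcases hB with h | ⟨q, hgap, _⟩
    · refine ⟨b + 1, by linarith, ?_⟩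
      ext z; simp only [mem_inter_iff, mem_Ioo, mem_empty_iff_false, iff_false]
      rintro ⟨hzK, hbz, _⟩
      exact absurd (le_csSup hKcomp.bddAbove hzK) (by rw [← h]; linarith)
    · exact ⟨q, hgap.1, by rw [inter_comm]; exact hgap.2.2.2⟩
  obtain ⟨u₀, hu₀, hu₀e⟩ := emptyA
  obtain ⟨v₀, hv₀, hv₀e⟩ := emptyB
  have hInfK' : sInf K' = a :=
    le_antisymm (csInf_le hK'comp.bddBelow haK') (le_csInf ⟨a, haK'⟩ fun y hy => hy.2.1)
  have hSupK' : sSup K' = b :=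
    le_antisymm (csSup_le ⟨a, haK'⟩ fun y hy => hy.2.2) (le_csSup hK'comp.bddAbove hbK')
  have noGapA : ∀ d', ¬ IsBoundedGap K a d' := by
    rintro d' ⟨had', _, _, hempty⟩
    exact not_isolated hKperf ha hu₀ had' hu₀e (by rw [inter_comm]; exact hempty)
  have noGapB : ∀ c', ¬ IsBoundedGap K c' b := by
    rintro c' ⟨hc'b, _, _, hempty⟩
    exact not_isolated hKperf hb hc'b hv₀ (by rw [inter_comm]; exact hempty) hv₀e
  have gapIff : ∀ c d, IsBoundedGap K' c d ↔ (IsBoundedGap K c d ∧ a < c ∧ d < b) := by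
    intro c d
    constructor
    · rintro ⟨hcd, hcK', hdK', hempty⟩
      have hKgap : IsBoundedGap K c d := by
        refine ⟨hcd, hcK'.1, hdK'.1, ?_⟩
        ext z; simp only [mem_inter_iff, mem_Ioo, mem_empty_iff_false, iff_false]
        rintro ⟨⟨hcz, hzd⟩, hzK⟩
        exact eq_empty_iff_forall_notMem.mp hempty z
          ⟨⟨hcz, hzd⟩, hzK, hcK'.2.1.trans hcz.le, hzd.le.trans hdK'.2.2⟩
      refine ⟨hKgap, lt_of_le_of_ne hcK'.2.1 ?_, lt_of_le_of_ne hdK'.2.2 ?_⟩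
      · intro h; exact noGapA d (h ▸ hKgap)
      · intro h; exact noGapB c (h ▸ hKgap)
    · rintro ⟨⟨hcd, hcK, hdK, hempty⟩, hac, hdb⟩
      refine ⟨hcd, ⟨hcK, hac.le, (hcd.trans hdb).le⟩, ⟨hdK, (hac.trans hcd).le, hdb.le⟩, ?_⟩
      ext z; simp only [mem_inter_iff, mem_Ioo, mem_empty_iff_false, iff_false]
      rintro ⟨hz, hzK', _⟩
      exact eq_empty_iff_forall_notMem.mp hempty z ⟨hz, hzK'⟩
  -- bridge equalities
  have rightEq : ∀ c d, IsBoundedGap K' c d →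
      rightBridgeEnd K' d (d - c) = rightBridgeEnd K d (d - c) := by
    intro c d hgap'
    obtain ⟨hKgap, hac, hdb⟩ := (gapIff c d).mp hgap'
    have hℓδ : d - c < δ := hSmall c d hKgap hac hdb
    set ℓ := d - c with hℓ
    set S' := {α : ℝ | d < α ∧ (α = sSup K' ∨ ∃ β, IsBoundedGap K' α β ∧ ℓ ≤ β - α)} with hS'
    set S := {α : ℝ | d < α ∧ (α = sSup K ∨ ∃ β, IsBoundedGap K α β ∧ ℓ ≤ β - α)} with hS
    have hbS' : b ∈ S' := ⟨hdb, Or.inl hSupK'.symm⟩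
    have hbS : b ∈ S := by
      rcases hB with h | ⟨q, hgapq, hq⟩
      · exact ⟨hdb, Or.inl h⟩
      · exact ⟨hdb, Or.inr ⟨q, hgapq, by linarith⟩⟩
    have hsub : S' ⊆ S := by
      rintro α ⟨hdα, h | ⟨β, hgapβ, hlen⟩⟩
      · rw [hSupK'] at h; rw [h]; exact hbS
      · exact ⟨hdα, Or.inr ⟨β, ((gapIff α β).mp hgapβ).1, hlen⟩⟩
    have hsub2 : ∀ α ∈ S, α < b → α ∈ S' := by
      rintro α ⟨hdα, h | ⟨β, hgapβ, hlen⟩⟩ hαb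
      · exfalso; exact absurd (le_csSup hKcomp.bddAbove hb) (by rw [← h]; linarith)
      · have hβb : β ≤ b := by
          by_contra hc
          push_neg at hc
          exact gap_absurd (by rw [inter_comm]; exact hgapβ.2.2.2) hb hαb hc
        have hβb' : β < b := lt_of_le_of_ne hβb (fun h => noGapB α (h ▸ hgapβ))
        exact ⟨hdα, Or.inr ⟨β, (gapIff α β).mpr ⟨hgapβ, hac.trans (hKgap.1.trans hdα), hβb'⟩, hlen⟩⟩
    have bddS' : BddBelow S' := ⟨d, fun α hα => hα.1.le⟩
    have bddS : BddBelow S := ⟨d, fun α hα => hα.1.le⟩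
    have hle1 : sInf S ≤ sInf S' := csInf_le_csInf bddS ⟨b, hbS'⟩ hsub
    have hle2 : sInf S' ≤ sInf S := by
      refine le_csInf ⟨b, hbS⟩ fun α hαS => ?_
      rcases lt_or_ge α b with h | h
      · exact csInf_le bddS' (hsub2 α hαS h)
      · exact (csInf_le bddS' hbS').trans h
    exact le_antisymm hle2 hle1
  have leftEq : ∀ c d, IsBoundedGap K' c d →
      leftBridgeEnd K' c (d - c) = leftBridgeEnd K c (d - c) := by
    intro c d hgap'
    obtain ⟨hKgap, hac, hdb⟩ := (gapIff c d).mp hgap'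
    have hℓδ : d - c < δ := hSmall c d hKgap hac hdb
    set ℓ := d - c with hℓ
    set T' := {α : ℝ | α < c ∧ (α = sInf K' ∨ ∃ β, IsBoundedGap K' β α ∧ ℓ ≤ α - β)} with hT'
    set T := {α : ℝ | α < c ∧ (α = sInf K ∨ ∃ β, IsBoundedGap K β α ∧ ℓ ≤ α - β)} with hT
    have haT' : a ∈ T' := ⟨hac, Or.inl hInfK'.symm⟩
    have haT : a ∈ T := by
      rcases hA with h | ⟨p, hgapp, hp⟩
      · exact ⟨hac, Or.inl h⟩
      · exact ⟨hac, Or.inr ⟨p, hgapp, by linarith⟩⟩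
    have hsub : T' ⊆ T := by
      rintro α ⟨hαc, h | ⟨β, hgapβ, hlen⟩⟩
      · rw [hInfK'] at h; rw [h]; exact haT
      · exact ⟨hαc, Or.inr ⟨β, ((gapIff β α).mp hgapβ).1, hlen⟩⟩
    have hsub2 : ∀ α ∈ T, a < α → α ∈ T' := by
      rintro α ⟨hαc, h | ⟨β, hgapβ, hlen⟩⟩ haα
      · exfalso; exact absurd (csInf_le hKcomp.bddBelow ha) (by rw [← h]; linarith)
      · have hβa : a ≤ β := by
          by_contra hc
          push_neg at hc
          exact gap_absurd (by rw [inter_comm]; exact hgapβ.2.2.2) ha hc haα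
        have hβa' : a < β := lt_of_le_of_ne hβa (fun h => noGapA α (h ▸ hgapβ))
        exact ⟨hαc, Or.inr ⟨β, (gapIff β α).mpr ⟨hgapβ, hβa', (hαc.trans hKgap.1).trans hdb⟩, hlen⟩⟩
    have bddT' : BddAbove T' := ⟨c, fun α hα => hα.1.le⟩
    have bddT : BddAbove T := ⟨c, fun α hα => hα.1.le⟩
    have hle1 : sSup T' ≤ sSup T := csSup_le_csSup bddT ⟨a, haT'⟩ hsub
    have hle2 : sSup T ≤ sSup T' := by
      refine csSup_le ⟨a, haT⟩ fun α hαT => ?_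
      rcases lt_or_ge a α with h | h
      · exact le_csSup bddT' (hsub2 α hαT h)
      · exact h.trans (le_csSup bddT' haT')
    exact le_antisymm hle1 hle2
  have valSubset : thicknessValues K' ⊆ thicknessValues K := by
    rintro r ⟨c, d, hgap', hr⟩
    refine ⟨c, d, ((gapIff c d).mp hgap').1, ?_⟩
    rcases hr with h | h
    · exact Or.inl (by rw [← rightEq c d hgap']; exact h)
    · exact Or.inr (by rw [← leftEq c d hgap']; exact h)
  have TVne : (thicknessValues K').Nonempty := by
    obtain ⟨p, q, _, _, hgap⟩ := exists_gap hK'comp hK'td haK' hbK' hab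
    exact ⟨_, p, q, hgap, Or.inl rfl⟩
  have TVbdd : BddBelow (thicknessValues K) := by
    refine ⟨0, ?_⟩
    rintro r ⟨c, d, hgap, hr⟩
    have hℓpos : 0 < d - c := by linarith [hgap.1]
    rcases hr with h | h
    · have hSne : d < sSup K := by
        obtain ⟨k, hkK, hk⟩ := acc_right hKperf hgap.2.2.1 hgap.1
          (by rw [inter_comm]; exact hgap.2.2.2) one_pos
        exact lt_of_lt_of_le hk.1 (le_csSup hKcomp.bddAbove hkK)
      have : d ≤ rightBridgeEnd K d (d - c) := by
        refine le_csInf ⟨sSup K, hSne, Or.inl rfl⟩ fun α hα => hα.1.le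
      rw [h]
      exact div_nonneg (by linarith) hℓpos.le
    · have hTne : sInf K < c := by
        obtain ⟨k, hkK, hk⟩ := acc_left hKperf hgap.2.1 hgap.1
          (by rw [inter_comm]; exact hgap.2.2.2) one_pos
        exact lt_of_le_of_lt (csInf_le hKcomp.bddBelow hkK) hk.2
      have : leftBridgeEnd K c (d - c) ≤ c := by
        refine csSup_le ⟨sInf K, hTne, Or.inl rfl⟩ fun α hα => hα.1.le
      rw [h]
      exact div_nonneg (by linarith) hℓpos.le
  constructor
  · refine ⟨⟨a, haK'⟩, hK'comp, ⟨hKperf.closed.inter isClosed_Icc, ?_⟩, hK'td⟩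
    rw [preperfect_iff_nhds]
    intro y hy U hU
    have hyIoo : y ∈ Ioo u₀ v₀ := ⟨lt_of_lt_of_le hu₀ hy.2.1, lt_of_le_of_lt hy.2.2 hv₀⟩
    obtain ⟨z, ⟨hzUI, hzK⟩, hzy⟩ := preperfect_iff_nhds.mp hKperf.acc y hy.1
      (U ∩ Ioo u₀ v₀) (Filter.inter_mem hU (Ioo_mem_nhds hyIoo.1 hyIoo.2))
    refine ⟨z, ⟨hzUI.1, hzK, ?_, ?_⟩, hzy⟩
    · by_contra hc
      push_neg at hc
      exact gap_absurd hu₀e hzK hzUI.2.1 hc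
    · by_contra hc
      push_neg at hc
      exact gap_absurd hv₀e hzK hc hzUI.2.2
  · exact csInf_le_csInf TVbdd TVne valSubset

lemma init_gap_right {K : Set ℝ} (hcomp : IsCompact K) (htd : IsTotallyDisconnected K)
    {x ε' : ℝ} (hx : x ∈ K) (hacc : (K ∩ Ioo x (x + ε')).Nonempty)
    (hng : ∀ q, ¬ IsBoundedGap K x q) :
    ∃ p q, IsBoundedGap K p q ∧ x < p ∧ q < x + ε' := by
  obtain ⟨k, hkK, hk⟩ := hacc
  obtain ⟨p, q, hxp, hqk, hgap⟩ := exists_gap hcomp htd hx hkK hk.1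
  refine ⟨p, q, hgap, lt_of_le_of_ne hxp ?_, lt_of_le_of_lt hqk hk.2⟩
  intro h; exact hng q (h ▸ hgap)

lemma init_gap_left {K : Set ℝ} (hcomp : IsCompact K) (htd : IsTotallyDisconnected K)
    {x ε' : ℝ} (hx : x ∈ K) (hacc : (K ∩ Ioo (x - ε') x).Nonempty)
    (hng : ∀ p, ¬ IsBoundedGap K p x) :
    ∃ p q, IsBoundedGap K p q ∧ x - ε' < p ∧ q < x := by
  obtain ⟨k, hkK, hk⟩ := hacc
  obtain ⟨p, q, hkp, hqx, hgap⟩ := exists_gap hcomp htd hkK hx hk.2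
  refine ⟨p, q, hgap, lt_of_lt_of_le hk.1 hkp, lt_of_le_of_ne hqx ?_⟩
  intro h; exact hng p (h ▸ hgap)

lemma right_select {K : Set ℝ} {x ε' δ : ℝ} (hδ : 0 < δ)
    {p₀ q₀ : ℝ} (hw : IsBoundedGap K p₀ q₀) (hwx : x < p₀) (hwε : q₀ < x + ε')
    (hwδ : δ ≤ q₀ - p₀) (hng : ∀ q, ¬ IsBoundedGap K x q) :
    ∃ b, b ∈ K ∧ x < b ∧ b < x + ε' ∧ (∃ q, IsBoundedGap K b q ∧ δ ≤ q - b) ∧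
      (∀ c d, IsBoundedGap K c d → x ≤ c → d < b → d - c < δ) := by
  set S : Set ℝ := {c' | x ≤ c' ∧ ∃ d', IsBoundedGap K c' d' ∧ d' < x + ε' ∧ δ ≤ d' - c'}
    with hS
  have hp₀S : p₀ ∈ S := ⟨hwx.le, q₀, hw, hwε, hwδ⟩
  have hne : S.Nonempty := ⟨p₀, hp₀S⟩
  have hbd : BddBelow S := ⟨x, fun s hs => hs.1⟩
  have hsep : ∀ s ∈ S, ∀ t ∈ S, s < t → s + δ ≤ t := by
    rintro s ⟨-, ds, hgs, -, hds⟩ t ⟨-, dt, hgt, -, -⟩ hst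
    have : ds ≤ t := by
      by_contra h
      push_neg at h
      exact gap_absurd (by rw [inter_comm]; exact hgs.2.2.2) hgt.2.1 hst h
    linarith
  set b := sInf S with hb
  obtain ⟨hxb, qb, hgb, hqbε, hqbδ⟩ := csInf_mem_of_separated hne hbd hδ hsep
  have hbp₀ : b ≤ p₀ := csInf_le hbd hp₀S
  have hxb' : x < b := lt_of_le_of_ne hxb (fun h => hng qb (h ▸ hgb))
  refine ⟨b, hgb.2.1, hxb', by linarith [hw.1], ⟨qb, hgb, hqbδ⟩, ?_⟩
  intro c d hgcd hxc hdb
  by_contra h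
  push_neg at h
  have hcS : c ∈ S := ⟨hxc, d, hgcd, by linarith [hbp₀, hw.1, hwε], h⟩
  exact absurd (csInf_le hbd hcS) (by push_neg; linarith [hgcd.1])

lemma left_select {K : Set ℝ} {x ε' δ : ℝ} (hδ : 0 < δ)
    {p₀ q₀ : ℝ} (hw : IsBoundedGap K p₀ q₀) (hwε : x - ε' < p₀) (hwx : q₀ < x)
    (hwδ : δ ≤ q₀ - p₀) (hng : ∀ p, ¬ IsBoundedGap K p x) :
    ∃ a, a ∈ K ∧ x - ε' < a ∧ a < x ∧ (∃ p, IsBoundedGap K p a ∧ δ ≤ a - p) ∧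
      (∀ c d, IsBoundedGap K c d → a < c → d ≤ x → d - c < δ) := by
  set S : Set ℝ := {d' | d' ≤ x ∧ ∃ c', IsBoundedGap K c' d' ∧ x - ε' < c' ∧ δ ≤ d' - c'}
    with hS
  have hq₀S : q₀ ∈ S := ⟨hwx.le, p₀, hw, hwε, hwδ⟩
  have hne : S.Nonempty := ⟨q₀, hq₀S⟩
  have hbd : BddAbove S := ⟨x, fun s hs => hs.1⟩
  have hsep : ∀ s ∈ S, ∀ t ∈ S, s < t → s + δ ≤ t := by
    rintro s ⟨-, cs, hgs, -, -⟩ t ⟨-, ct, hgt, -, hdt⟩ hst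
    have : s ≤ ct := by
      by_contra h
      push_neg at h
      exact gap_absurd (by rw [inter_comm]; exact hgt.2.2.2) hgs.2.2.1 h hst
    linarith
  set a := sSup S with ha
  obtain ⟨hax, pa, hga, hpaε, hpaδ⟩ := csSup_mem_of_separated hne hbd hδ hsep
  have haq₀ : q₀ ≤ a := le_csSup hbd hq₀S
  have hax' : a < x := lt_of_le_of_ne hax (fun h => hng pa (h ▸ hga))
  refine ⟨a, hga.2.2.1, by linarith [hw.1], hax', ⟨pa, hga, hpaδ⟩, ?_⟩
  intro c d hgcd hac hdx
  by_contra h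
  push_neg at h
  have hdS : d ∈ S := ⟨hdx, c, hgcd, by linarith [hw.1], h⟩
  exact absurd (le_csSup hbd hdS) (by push_neg; linarith [hgcd.1])

/-- **Lemma.** Let `K ⊂ ℝ` be a Cantor set, `x ∈ K`, and `I` an open interval containing `x`.
There is a compact interval `J = [a, b] ⊆ I` containing `x` such that `K' := K ∩ J` is a
Cantor set with `τ(K') ≥ τ(K)`. If `x` is a gap endpoint of `K`, then `J` may be chosen so
that `x` is an endpoint of `J` and a gap endpoint of `K'`; if `x` is not a gap endpoint of
`K`, then `J` may be chosen so that `x` is not a gap endpoint of `K'`. -/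
theorem exists_compact_subinterval_thickness (K : Set ℝ) (hK : IsCantorSet K)
    (x : ℝ) (hx : x ∈ K) (I : Set ℝ) (hIopen : IsOpen I) (hIconn : I.OrdConnected)
    (hxI : x ∈ I) :
    ∃ a b : ℝ, a ≤ b ∧ Set.Icc a b ⊆ I ∧ x ∈ Set.Icc a b ∧
      IsCantorSet (K ∩ Set.Icc a b) ∧
      thickness (K ∩ Set.Icc a b) ≥ thickness K ∧
      (IsGapEndpoint K x → (x = a ∨ x = b) ∧ IsGapEndpoint (K ∩ Set.Icc a b) x) ∧
      (¬ IsGapEndpoint K x → ¬ IsGapEndpoint (K ∩ Set.Icc a b) x) := by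
  obtain ⟨hKne, hKcomp, hKperf, hKtd⟩ := hK
  obtain ⟨ε, hε, hball⟩ := Metric.isOpen_iff.mp hIopen x hxI
  set ε' : ℝ := ε / 2 with hε'def
  have hε' : 0 < ε' := by positivity
  have hIcc : ∀ z, x - ε' ≤ z → z ≤ x + ε' → z ∈ I := by
    intro z h1 h2
    apply hball
    rw [Real.ball_eq_Ioo]
    exact ⟨by simp only [hε'def] at h1 ⊢; linarith, by simp only [hε'def] at h2 ⊢; linarith⟩
  have hxSup : x ≤ sSup K := le_csSup hKcomp.bddAbove hx
  have hxInf : sInf K ≤ x := csInf_le hKcomp.bddBelow hx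
  by_cases hL : (∃ p, IsBoundedGap K p x) ∨ x = sInf K
  · -- x is a left-sided gap endpoint: take a = x
    have hLempty : ∃ u, u < x ∧ K ∩ Ioo u x = ∅ := by
      rcases hL with ⟨p, hg⟩ | h
      · exact ⟨p, hg.1, by rw [inter_comm]; exact hg.2.2.2⟩
      · refine ⟨x - 1, by linarith, eq_empty_iff_forall_notMem.mpr ?_⟩
        rintro z ⟨hzK, _, hzx⟩
        exact absurd (csInf_le hKcomp.bddBelow hzK) (by rw [← h]; linarith)
    obtain ⟨u, hu, hue⟩ := hLempty
    have hngR : ∀ q, ¬ IsBoundedGap K x q := fun q hg =>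
      not_isolated hKperf hx hu hg.1 hue (by rw [inter_comm]; exact hg.2.2.2)
    have hxM : x < sSup K := by
      refine lt_of_le_of_ne hxSup fun h => ?_
      refine not_isolated hKperf hx hu (show x < x + 1 by linarith) hue
        (eq_empty_iff_forall_notMem.mpr ?_)
      rintro z ⟨hzK, hxz, _⟩
      exact absurd (le_csSup hKcomp.bddAbove hzK) (by rw [← h]; linarith)
    have hacc : (K ∩ Ioo x (x + ε')).Nonempty := by
      by_contra h
      obtain ⟨q, hg⟩ := gap_of_empty_right hKcomp hx (by linarith) hxM
        (not_nonempty_iff_eq_empty.mp h)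
      exact hngR q hg
    obtain ⟨p₀, q₀, hg₀, hxp₀, hq₀ε⟩ := init_gap_right hKcomp hKtd hx hacc hngR
    obtain ⟨δ₀, hδ₀, hAx⟩ : ∃ δ₀, 0 < δ₀ ∧
        (x = sInf K ∨ ∃ p, IsBoundedGap K p x ∧ δ₀ ≤ x - p) := by
      rcases hL with ⟨p, hg⟩ | h
      · exact ⟨x - p, by linarith [hg.1], Or.inr ⟨p, hg, le_refl _⟩⟩
      · exact ⟨1, one_pos, Or.inl h⟩
    set δ : ℝ := min δ₀ (q₀ - p₀) with hδdef
    have hδ : 0 < δ := lt_min hδ₀ (by linarith [hg₀.1])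
    obtain ⟨b, hbK, hxb, hbε, hBgap, hsmallR⟩ :=
      right_select hδ hg₀ hxp₀ hq₀ε (min_le_right _ _) hngR
    have hA : x = sInf K ∨ ∃ p, IsBoundedGap K p x ∧ δ ≤ x - p := by
      rcases hAx with h | ⟨p, hg, hp⟩
      · exact Or.inl h
      · exact Or.inr ⟨p, hg, le_trans (min_le_left _ _) hp⟩
    obtain ⟨hCantor, hThick⟩ := main_aux ⟨hKne, hKcomp, hKperf, hKtd⟩ hx hbK hxb hδ hA
      (Or.inr hBgap) (fun c d hg hxc hdb => hsmallR c d hg hxc.le hdb)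
    have hInfK' : sInf (K ∩ Icc x b) = x :=
      le_antisymm (csInf_le (hKcomp.inter_right isClosed_Icc).bddBelow
        ⟨hx, le_refl x, hxb.le⟩) (le_csInf ⟨x, hx, le_refl x, hxb.le⟩ fun y hy => hy.2.1)
    refine ⟨x, b, hxb.le, ?_, ⟨le_refl x, hxb.le⟩, hCantor, hThick, ?_, ?_⟩
    · intro z hz; exact hIcc z (by linarith [hz.1]) (by linarith [hz.2, hbε])
    · intro _
      exact ⟨Or.inl rfl, Or.inr (Or.inr (Or.inl hInfK'.symm))⟩
    · intro h
      exfalso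
      apply h
      rcases hL with ⟨p, hg⟩ | h'
      · exact Or.inr (Or.inl ⟨p, hg⟩)
      · exact Or.inr (Or.inr (Or.inl h'))
  · by_cases hR : (∃ q, IsBoundedGap K x q) ∨ x = sSup K
    · -- x is a right-sided gap endpoint: take b = x
      have hRempty : ∃ v, x < v ∧ K ∩ Ioo x v = ∅ := by
        rcases hR with ⟨q, hg⟩ | h
        · exact ⟨q, hg.1, by rw [inter_comm]; exact hg.2.2.2⟩
        · refine ⟨x + 1, by linarith, eq_empty_iff_forall_notMem.mpr ?_⟩
          rintro z ⟨hzK, hxz, _⟩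
          exact absurd (le_csSup hKcomp.bddAbove hzK) (by rw [← h]; linarith)
      obtain ⟨v, hv, hve⟩ := hRempty
      have hngL : ∀ p, ¬ IsBoundedGap K p x := fun p hg =>
        not_isolated hKperf hx hg.1 hv (by rw [inter_comm]; exact hg.2.2.2) hve
      have hxm : sInf K < x := by
        refine lt_of_le_of_ne hxInf fun h => ?_
        refine not_isolated hKperf hx (show x - 1 < x by linarith) hv
          (eq_empty_iff_forall_notMem.mpr ?_) hve
        rintro z ⟨hzK, _, hzx⟩
        exact absurd (csInf_le hKcomp.bddBelow hzK) (by rw [h]; linarith)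
      have hacc : (K ∩ Ioo (x - ε') x).Nonempty := by
        by_contra h
        obtain ⟨p, hg⟩ := gap_of_empty_left hKcomp hx (by linarith) hxm
          (not_nonempty_iff_eq_empty.mp h)
        exact hngL p hg
      obtain ⟨p₀, q₀, hg₀, hp₀ε, hq₀x⟩ := init_gap_left hKcomp hKtd hx hacc hngL
      obtain ⟨δ₀, hδ₀, hBx⟩ : ∃ δ₀, 0 < δ₀ ∧
          (x = sSup K ∨ ∃ q, IsBoundedGap K x q ∧ δ₀ ≤ q - x) := by
        rcases hR with ⟨q, hg⟩ | h
        · exact ⟨q - x, by linarith [hg.1], Or.inr ⟨q, hg, le_refl _⟩⟩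
        · exact ⟨1, one_pos, Or.inl h⟩
      set δ : ℝ := min δ₀ (q₀ - p₀) with hδdef
      have hδ : 0 < δ := lt_min hδ₀ (by linarith [hg₀.1])
      obtain ⟨a, haK, haε, hax, hAgap, hsmallL⟩ :=
        left_select hδ hg₀ hp₀ε hq₀x (min_le_right _ _) hngL
      have hB : x = sSup K ∨ ∃ q, IsBoundedGap K x q ∧ δ ≤ q - x := by
        rcases hBx with h | ⟨q, hg, hq⟩
        · exact Or.inl h
        · exact Or.inr ⟨q, hg, le_trans (min_le_left _ _) hq⟩
      obtain ⟨hCantor, hThick⟩ := main_aux ⟨hKne, hKcomp, hKperf, hKtd⟩ haK hx hax hδ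
        (Or.inr hAgap) hB (fun c d hg hac hdx => hsmallL c d hg hac hdx.le)
      have hSupK' : sSup (K ∩ Icc a x) = x :=
        le_antisymm (csSup_le ⟨x, hx, hax.le, le_refl x⟩ fun y hy => hy.2.2)
          (le_csSup (hKcomp.inter_right isClosed_Icc).bddAbove ⟨hx, hax.le, le_refl x⟩)
      refine ⟨a, x, hax.le, ?_, ⟨hax.le, le_refl x⟩, hCantor, hThick, ?_, ?_⟩
      · intro z hz; exact hIcc z (by linarith [hz.1, haε]) (by linarith [hz.2])
      · intro _
        exact ⟨Or.inr rfl, Or.inr (Or.inr (Or.inr hSupK'.symm))⟩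
      · intro h
        exfalso
        apply h
        rcases hR with ⟨q, hg⟩ | h'
        · exact Or.inl ⟨q, hg⟩
        · exact Or.inr (Or.inr (Or.inr h'))
    · -- x is not a gap endpoint
      have hngR : ∀ q, ¬ IsBoundedGap K x q := fun q hg => hR (Or.inl ⟨q, hg⟩)
      have hngL : ∀ p, ¬ IsBoundedGap K p x := fun p hg => hL (Or.inl ⟨p, hg⟩)
      have hxM : x < sSup K := lt_of_le_of_ne hxSup fun h => hR (Or.inr h)
      have hxm : sInf K < x := lt_of_le_of_ne hxInf fun h => hL (Or.inr h.symm)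
      have haccR : (K ∩ Ioo x (x + ε')).Nonempty := by
        by_contra h
        obtain ⟨q, hg⟩ := gap_of_empty_right hKcomp hx (by linarith) hxM
          (not_nonempty_iff_eq_empty.mp h)
        exact hngR q hg
      have haccL : (K ∩ Ioo (x - ε') x).Nonempty := by
        by_contra h
        obtain ⟨p, hg⟩ := gap_of_empty_left hKcomp hx (by linarith) hxm
          (not_nonempty_iff_eq_empty.mp h)
        exact hngL p hg
      obtain ⟨p₀, q₀, hg₀, hxp₀, hq₀ε⟩ := init_gap_right hKcomp hKtd hx haccR hngR
      obtain ⟨p₁, q₁, hg₁, hp₁ε, hq₁x⟩ := init_gap_left hKcomp hKtd hx haccL hngL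
      set δ : ℝ := min (q₀ - p₀) (q₁ - p₁) with hδdef
      have hδ : 0 < δ := lt_min (by linarith [hg₀.1]) (by linarith [hg₁.1])
      obtain ⟨b, hbK, hxb, hbε, hBgap, hsmallR⟩ :=
        right_select hδ hg₀ hxp₀ hq₀ε (min_le_left _ _) hngR
      obtain ⟨a, haK, haε, hax, hAgap, hsmallL⟩ :=
        left_select hδ hg₁ hp₁ε hq₁x (min_le_right _ _) hngL
      have hab : a < b := hax.trans hxb
      have hSmall : ∀ c d, IsBoundedGap K c d → a < c → d < b → d - c < δ := by
        intro c d hg hac hdb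
        rcases le_or_gt d x with h | h
        · exact hsmallL c d hg hac h
        · rcases le_or_gt x c with h2 | h2
          · exact hsmallR c d hg h2 hdb
          · exact absurd (gap_absurd (by rw [inter_comm]; exact hg.2.2.2) hx h2 h) id
      obtain ⟨hCantor, hThick⟩ := main_aux ⟨hKne, hKcomp, hKperf, hKtd⟩ haK hbK hab hδ
        (Or.inr hAgap) (Or.inr hBgap) hSmall
      have hbddK' := (hKcomp.inter_right (isClosed_Icc (a := a) (b := b)))
      have hInfK' : sInf (K ∩ Icc a b) = a :=
        le_antisymm (csInf_le hbddK'.bddBelow ⟨haK, le_refl a, hab.le⟩)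
          (le_csInf ⟨a, haK, le_refl a, hab.le⟩ fun y hy => hy.2.1)
      have hSupK' : sSup (K ∩ Icc a b) = b :=
        le_antisymm (csSup_le ⟨a, haK, le_refl a, hab.le⟩ fun y hy => hy.2.2)
          (le_csSup hbddK'.bddAbove ⟨hbK, hab.le, le_refl b⟩)
      refine ⟨a, b, hab.le, ?_, ⟨hax.le, hxb.le⟩, hCantor, hThick, ?_, ?_⟩
      · intro z hz; exact hIcc z (by linarith [hz.1, haε]) (by linarith [hz.2, hbε])
      · intro hGE
        exfalso
        rcases hGE with ⟨q, hg⟩ | ⟨p, hg⟩ | h | h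
        · exact hngR q hg
        · exact hngL p hg
        · exact hL (Or.inr h)
        · exact hR (Or.inr h)
      · intro _
        rintro (⟨q', hg⟩ | ⟨p', hg⟩ | h | h)
        · refine hngR q' ⟨hg.1, hx, hg.2.2.1.1, eq_empty_iff_forall_notMem.mpr ?_⟩
          rintro z ⟨⟨h1, h2⟩, hzK⟩
          refine eq_empty_iff_forall_notMem.mp hg.2.2.2 z ⟨⟨h1, h2⟩, hzK, ?_, ?_⟩
          · linarith [hax.le]
          · linarith [hg.2.2.1.2.2]
        · refine hngL p' ⟨hg.1, hg.2.1.1, hx, eq_empty_iff_forall_notMem.mpr ?_⟩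
          rintro z ⟨⟨h1, h2⟩, hzK⟩
          refine eq_empty_iff_forall_notMem.mp hg.2.2.2 z ⟨⟨h1, h2⟩, hzK, ?_, ?_⟩
          · linarith [hg.2.1.2.1]
          · linarith [hxb.le]
        · rw [hInfK'] at h; exact absurd h (by linarith)
        · rw [hSupK'] at h; exact (ne_of_lt hxb) h
end

section
/- If a pair (τ₁, τ₂) of positive reals satisfies the Hunt–Kan–Yorke condition, then τ₁·τ₂ > 5. -/
/-- The Hunt–Kan–Yorke condition on a pair of positive reals `(τ₁, τ₂)`. -/
def HKYPair (τ₁ τ₂ : ℝ) : Prop :=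
  0 < τ₁ ∧ 0 < τ₂ ∧ τ₂ ≤ τ₁ ∧
    τ₁ > (τ₂ ^ 2 + 3 * τ₂ + 1) / τ₂ ^ 2 ∧ τ₂ > (2 * τ₁ + 1) ^ 2 / τ₁ ^ 3

/-- **Remark.** The HKY condition implies `τ₁ · τ₂ > 5`. -/
theorem hky_mul_gt_five (τ₁ τ₂ : ℝ) (h : HKYPair τ₁ τ₂) : τ₁ * τ₂ > 5 := by
  obtain ⟨h1, h2, h3, h4, h5⟩ := h
  rw [gt_iff_lt, div_lt_iff₀ (by positivity)] at h4
  nlinarith [sq_nonneg (τ₂ - 1), mul_pos h1 h2]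
end

section
/- If τ₁ ≥ τ₂ > √2 + 1, then the pair (τ₁, τ₂) satisfies the Hunt–Kan–Yorke condition. -/
/-- **Remark.** If `τ₁ ≥ τ₂ > √2 + 1`, then `(τ₁, τ₂)` satisfies the HKY condition. -/
theorem hky_of_gt_sqrt_two_add_one (τ₁ τ₂ : ℝ) (h₁₂ : τ₁ ≥ τ₂)
    (h₂ : τ₂ > Real.sqrt 2 + 1) : HKYPair τ₁ τ₂ := by
  set s := Real.sqrt 2 with hs_def
  have hs2 : s ^ 2 = 2 := Real.sq_sqrt (by norm_num)
  have hs1 : 1 < s := by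
    rw [hs_def]
    nlinarith [Real.sq_sqrt (show (2:ℝ) ≥ 0 by norm_num), Real.sqrt_nonneg 2]
  have h2pos : (0:ℝ) < τ₂ := by linarith
  have h1pos : (0:ℝ) < τ₁ := by linarith
  refine ⟨h1pos, h2pos, h₁₂, ?_, ?_⟩
  · rw [gt_iff_lt, div_lt_iff₀ (by positivity)]
    nlinarith [mul_pos (show (0:ℝ) < τ₂ - 1 - s by linarith)
        (show (0:ℝ) < τ₂ - 1 + s by linarith),
      mul_pos h2pos h2pos, sq_nonneg (τ₂ - 1), mul_nonneg (sub_nonneg.2 h₁₂) (sq_nonneg τ₂),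
      mul_pos (mul_pos (show (0:ℝ) < τ₂ + 1 by linarith)
        (show (0:ℝ) < τ₂ - 1 - s by linarith)) (show (0:ℝ) < τ₂ - 1 + s by linarith)]
  · rw [gt_iff_lt, div_lt_iff₀ (by positivity)]
    have hfac : (0:ℝ) ≤ (τ₁ - s - 1) * ((s + 1) * τ₁ ^ 2 + (2 * s - 1) * τ₁ + (s - 1)) := by
      apply mul_nonneg (by linarith)
      nlinarith [sq_nonneg τ₁, mul_pos h1pos h1pos]
    -- (s+1) * τ₁^3 - (2τ₁+1)^2 = hfac (using s^2 = 2)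
    have key : (2 * τ₁ + 1) ^ 2 ≤ (s + 1) * τ₁ ^ 3 := by nlinarith [hfac, hs2]
    have : (s + 1) * τ₁ ^ 3 < τ₂ * τ₁ ^ 3 := by
      apply mul_lt_mul_of_pos_right (by linarith) (by positivity)
    linarith
end

section
/- There is no constant c > 0 such that τ₁·τ₂ > c implies the Hunt–Kan–Yorke condition: for every c > 0 there exist positive reals τ₁ ≥ τ₂ with τ₁·τ₂ > c such that (τ₁, τ₂) does not satisfy the HKY condition. -/
/-! The HKY condition forces `τ₁ τ₂² > τ₂² + 3τ₂ + 1 > 1`, whereas `τ₁ τ₂` can be made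
arbitrarily large along the curve `τ₁ τ₂² = 1`, e.g. at `(t², 1/t)` for large `t`. -/

theorem HKYPair.one_lt_mul_sq {τ₁ τ₂ : ℝ} (h : HKYPair τ₁ τ₂) : 1 < τ₁ * τ₂ ^ 2 := by
  obtain ⟨-, hτ₂, -, hτ₁, -⟩ := h
  rw [gt_iff_lt, div_lt_iff₀ (by positivity)] at hτ₁
  nlinarith

theorem not_hkyPair_sq_inv (t : ℝ) : ¬ HKYPair (t ^ 2) t⁻¹ := fun h => by
  have := h.one_lt_mul_sq
  rw [inv_pow, mul_inv_cancel₀ (pow_ne_zero 2 (h.2.1.ne' ∘ inv_eq_zero.mpr))] at this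
  exact this.false

/-- **Remark.** There is no constant `c > 0` such that `τ₁ · τ₂ > c` implies the HKY
condition: for every `c > 0` there exist positive reals `τ₁ ≥ τ₂` with `τ₁ · τ₂ > c` for
which `(τ₁, τ₂)` fails the HKY condition. -/
theorem hky_not_implied_by_product (c : ℝ) (hc : 0 < c) :
    ∃ τ₁ τ₂ : ℝ, 0 < τ₂ ∧ τ₂ ≤ τ₁ ∧ τ₁ * τ₂ > c ∧ ¬ HKYPair τ₁ τ₂ := by
  set t := c + 1
  have ht : 1 ≤ t := by linarith
  refine ⟨t ^ 2, t⁻¹, by positivity, ?_, ?_, not_hkyPair_sq_inv t⟩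
  · calc t⁻¹ ≤ 1 := inv_le_one_of_one_le₀ ht
      _ ≤ t ^ 2 := one_le_pow₀ ht
  · have : t ^ 2 * t⁻¹ = t := by field_simp
    rw [this]
    linarith
end
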